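/- Global Consistency: in any execution of the implementation operational semantics starting from an empty controller queue and controller state, if the network event structure is locally-determined, then at every step i the event-set Qᵢ ∪ Rᵢ (controller queue union controller state) is consistent. -/
import Mathlib


/-- A state of the implementation: controller queue `Q`, controller state `R`,
and each switch's local event-set. -/
structure NetState (E Sw : Type*) where
  Q : Finset E
  R : Finset E
  locals : Sw → Finset E

/-- Operational semantics of the implementation. -/
inductive Step {E Sw : Type*} [DecidableEq E] [DecidableEq Sw]
    (sw : E → Sw) (con : Finset E → Prop) : NetState E Sw → NetState E Sw → Prop
  | switch (σ : NetState E Sw) (e : E)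
      (hcon : con (insert e (σ.locals (sw e))))
      (hsent : ∀ e' ∈ σ.Q ∪ σ.R, sw e' = sw e → e' ∈ σ.locals (sw e)) :
      Step sw con σ
        ⟨insert e σ.Q, σ.R,
          Function.update σ.locals (sw e) (insert e (σ.locals (sw e)))⟩
  | ctrlRecv (σ : NetState E Sw) (e : E) (he : e ∈ σ.Q) :
      Step sw con σ ⟨σ.Q.erase e, insert e σ.R, σ.locals⟩
  | ctrlSend (σ : NetState E Sw) (s : Sw) :
      Step sw con σ ⟨σ.Q, σ.R, Function.update σ.locals s (σ.locals s ∪ σ.R)⟩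

lemma exists_min_incon {E : Type*} (con : Finset E → Prop) :
    ∀ X : Finset E, ¬ con X →
      ∃ Y ⊆ X, ¬ con Y ∧ ∀ Z : Finset E, Z ⊂ Y → con Z := by
  intro X
  induction X using Finset.strongInductionOn with
  | _ X ih =>
    intro hX
    by_cases h : ∀ Z : Finset E, Z ⊂ X → con Z
    · exact ⟨X, subset_rfl, hX, h⟩
    · push_neg at h
      obtain ⟨Z, hZX, hZ⟩ := h
      obtain ⟨Y, hYZ, hY⟩ := ih Z hZX hZ
      exact ⟨Y, hYZ.trans hZX.subset, hY⟩

/-- Global Consistency (Lemma 3): in any execution of a locally-determined NES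
implementation, the controller queue union controller state stays consistent. -/
theorem global_consistency {E Sw : Type*} [DecidableEq E] [DecidableEq Sw]
    (sw : E → Sw) (con : Finset E → Prop)
    (hmono : ∀ {X Y : Finset E}, con X → Y ⊆ X → con Y)
    (hempty : con ∅)
    (hloc : ∀ Y : Finset E, (¬ con Y ∧ ∀ Z : Finset E, Z ⊂ Y → con Z) →
      ∃ s : Sw, ∀ e ∈ Y, sw e = s)
    (σ : ℕ → NetState E Sw)
    (hinit : σ 0 = ⟨∅, ∅, fun _ => ∅⟩)
    (hstep : ∀ i : ℕ, Step sw con (σ i) (σ (i + 1))) :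
    ∀ i : ℕ, con ((σ i).Q ∪ (σ i).R) := by
  intro i
  induction i with
  | zero => simpa [hinit] using hempty
  | succ i ih =>
    have hst := hstep i
    revert hst
    generalize σ (i + 1) = τ
    intro hst
    cases hst with
    | switch e hcon hsent =>
      rw [show (⟨insert e (σ i).Q, (σ i).R,
          Function.update (σ i).locals (sw e) (insert e ((σ i).locals (sw e)))⟩ :
          NetState E Sw).Q ∪ _ = insert e ((σ i).Q ∪ (σ i).R) from Finset.insert_union e _ _]
      by_contra h
      obtain ⟨Y, hYsub, hYincon, hYmin⟩ := exists_min_incon con _ h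
      have heY : e ∈ Y := by
        by_contra heY
        exact hYincon (hmono ih (fun x hx => by
          have := hYsub hx
          rcases Finset.mem_insert.mp this with rfl | hm
          · exact absurd hx heY
          · exact hm))
      obtain ⟨s, hs⟩ := hloc Y ⟨hYincon, hYmin⟩
      have hse : s = sw e := (hs e heY).symm
      have hsub : Y ⊆ insert e ((σ i).locals (sw e)) := by
        intro x hx
        rcases Finset.mem_insert.mp (hYsub hx) with rfl | hm
        · exact Finset.mem_insert_self _ _
        · exact Finset.mem_insert_of_mem
            (hsent x hm ((hs x hx).trans hse))
      exact hYincon (hmono hcon hsub)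
    | ctrlRecv e he =>
      refine hmono ih ?_
      intro x hx
      rcases Finset.mem_union.mp hx with hx | hx
      · exact Finset.mem_union_left _ (Finset.mem_of_mem_erase hx)
      · rcases Finset.mem_insert.mp hx with rfl | hx
        · exact Finset.mem_union_left _ he
        · exact Finset.mem_union_right _ hx
    | ctrlSend s => exact ih
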